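/- arXiv:1906.02377 — 3 statements merged into one kernel-verified Lean document; each statement's English description precedes it below -/
import Mathlib

section
/- Discrete Girsanov shift: Let (Ω, F, Q) be a probability space, n₀ and n_p positive integers, c > 0 a real constant. Let (Z_k)_{k≥1} be i.i.d. random vectors Ω → ℝ^{n₀}, each with law the n₀-fold product of the standard normal N(0,1), and let (X_k)_{k≥1} be random vectors Ω → ℝ^{n₀} with all components taking values in {−1, +1}, such that the family (X_k) is independent of the family (Z_k) under Q. Define β_{n_p} = exp(c Σ_{k=1}^{n_p} ⟨X_k, Z_k⟩ − ½ c² n₀ n_p) and the probability measure P on F_{n_p} = σ(X_k; k ≥ 1) ∨ σ(Z_1, …, Z_{n_p}) by P(A) = ∫_A β_{n_p} dQ. Then, under P, the shifted vectors W_k := Z_k − cX_k for 1 ≤ k ≤ n_p are mutually independent standard Gaussian random vectors in ℝ^{n₀}: the pushforward of P under ω ↦ (W_1(ω), …, W_{n_p}(ω)) equals the n_p-fold product of the n₀-fold product of N(0,1). -/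
/-!
Conditionally on the signs `X`, the noise `Z` is still standard Gaussian, and since every
`X k i ^ 2 = 1` the density `β` factors over coordinates into the Cameron–Martin densities
`exp (b z - b ^ 2 / 2)` with `b = c X k i`. Tilting `𝓝(0, 1)` by such a density gives `𝓝(b, 1)`,
so for every fixed value of `X` the shifted noise `Z - c X` is standard Gaussian under the tilted
law; averaging over the law of `X` gives the claim.
-/

open MeasureTheory ProbabilityTheory
open scoped ENNReal

section Pi

variable {ι : Type*} [Fintype ι] {E : ι → Type*} [∀ i, MeasurableSpace (E i)]
  {μ : (i : ι) → Measure (E i)} [∀ i, IsProbabilityMeasure (μ i)]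
  {f : (i : ι) → E i → ℝ≥0∞}

lemma lintegral_pi_prod_eq_prod (hf : ∀ i, Measurable (f i)) :
    ∫⁻ x, ∏ i, f i (x i) ∂Measure.pi μ = ∏ i, ∫⁻ t, f i t ∂μ i := by
  have hindep : iIndepFun (fun i x => f i (x i)) (Measure.pi μ) :=
    iIndepFun_pi fun i => (hf i).aemeasurable
  rw [lintegral_prod_eq_prod_lintegral_of_indepFun Finset.univ _ hindep
    fun i => (hf i).comp (measurable_pi_apply i)]
  exact Finset.prod_congr rfl fun i _ => (measurePreserving_eval μ i).lintegral_comp (hf i)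

lemma pi_withDensity_eq_withDensity_pi (hf : ∀ i, Measurable (f i))
    [∀ i, SigmaFinite ((μ i).withDensity (f i))] :
    Measure.pi (fun i => (μ i).withDensity (f i))
      = (Measure.pi μ).withDensity (fun x => ∏ i, f i (x i)) := by
  classical
  refine Measure.pi_eq fun s hs => ?_
  have hind : (Set.univ.pi s).indicator (fun x => ∏ i, f i (x i))
      = fun x => ∏ i, (s i).indicator (f i) (x i) := by
    funext x
    simp only [Set.indicator_apply, Finset.prod_ite_zero, Set.mem_univ_pi, Finset.mem_univ,
      forall_const]
  rw [withDensity_apply _ (.univ_pi hs), ← lintegral_indicator (.univ_pi hs), hind,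
    lintegral_pi_prod_eq_prod fun i => (hf i).indicator (hs i)]
  exact Finset.prod_congr rfl fun i _ => by
    rw [withDensity_apply _ (hs i), lintegral_indicator (hs i)]

lemma map_withDensity_pi_eq_pi {F : ι → Type*} [∀ i, MeasurableSpace (F i)]
    {g : (i : ι) → E i → F i} (hf : ∀ i, Measurable (f i)) (hg : ∀ i, Measurable (g i))
    {ν : (i : ι) → Measure (F i)} [∀ i, SigmaFinite (ν i)]
    (h : ∀ i, ((μ i).withDensity (f i)).map (g i) = ν i) :
    ((Measure.pi μ).withDensity (fun x => ∏ i, f i (x i))).map (fun x i => g i (x i))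
      = Measure.pi ν := by
  have : ∀ i, SigmaFinite ((μ i).withDensity (f i)) := fun i =>
    .of_map _ (hg i).aemeasurable (by rw [h i]; infer_instance)
  have : ∀ i, SigmaFinite (((μ i).withDensity (f i)).map (g i)) := fun i => by
    rw [h i]; infer_instance
  rw [← pi_withDensity_eq_withDensity_pi hf, Measure.pi_map_pi fun i => (hg i).aemeasurable]
  exact congrArg Measure.pi (funext h)

end Pi

noncomputable def gaussianTiltDensity (b t : ℝ) : ℝ≥0∞ :=
  ENNReal.ofReal (Real.exp (b * t - b ^ 2 / 2))

@[fun_prop]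
lemma Measurable.gaussianTiltDensity {α : Type*} [MeasurableSpace α] {f g : α → ℝ}
    (hf : Measurable f) (hg : Measurable g) :
    Measurable fun a => gaussianTiltDensity (f a) (g a) := by
  unfold _root_.gaussianTiltDensity
  fun_prop

lemma gaussianReal_withDensity_gaussianTiltDensity (b : ℝ) :
    (gaussianReal 0 1).withDensity (gaussianTiltDensity b) = gaussianReal b 1 := by
  rw [gaussianReal_of_var_ne_zero 0 one_ne_zero, gaussianReal_of_var_ne_zero b one_ne_zero,
    ← withDensity_mul _ (measurable_gaussianPDF 0 1) (by fun_prop)]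
  congr 1
  funext t
  simp only [Pi.mul_apply, gaussianPDF, gaussianTiltDensity, gaussianPDFReal]
  rw [← ENNReal.ofReal_mul (by positivity), mul_assoc, ← Real.exp_add]
  congr 3
  push_cast
  ring

lemma map_sub_withDensity_gaussianTiltDensity (b : ℝ) :
    ((gaussianReal 0 1).withDensity (gaussianTiltDensity b)).map (· - b) = gaussianReal 0 1 := by
  rw [gaussianReal_withDensity_gaussianTiltDensity, gaussianReal_map_sub_const, sub_self]

lemma map_sub_withDensity_prod_gaussianTiltDensity {κ ι : Type*} [Fintype κ] [Fintype ι]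
    (b : κ → ι → ℝ) :
    ((Measure.pi fun _ : κ => Measure.pi fun _ : ι => gaussianReal 0 1).withDensity
        (fun z => ∏ k, ∏ i, gaussianTiltDensity (b k i) (z k i))).map
      (fun z k i => z k i - b k i)
      = Measure.pi fun _ : κ => Measure.pi fun _ : ι => gaussianReal 0 1 :=
  map_withDensity_pi_eq_pi (fun k => by fun_prop) (fun k => by fun_prop) fun k =>
    map_withDensity_pi_eq_pi (fun i => by fun_prop) (fun i => by fun_prop) fun i =>
      map_sub_withDensity_gaussianTiltDensity (b k i)

lemma map_withDensity_comp {Ω A : Type*} [MeasurableSpace Ω] [MeasurableSpace A]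
    (μ : Measure Ω) {T : Ω → A} (hT : Measurable T) {f : A → ℝ≥0∞} (hf : Measurable f) :
    (μ.withDensity (f ∘ T)).map T = (μ.map T).withDensity f := by
  ext s hs
  rw [Measure.map_apply hT hs, withDensity_apply _ hs, withDensity_apply _ (hT hs),
    setLIntegral_map hs hf hT, Function.comp_def]

lemma map_withDensity_prod_eq_of_forall {A B C : Type*} [MeasurableSpace A] [MeasurableSpace B]
    [MeasurableSpace C] (μ : Measure A) [IsProbabilityMeasure μ] (ν : Measure B) [SFinite ν]
    {G : A × B → ℝ≥0∞} (hG : Measurable G) {ψ : A × B → C} (hψ : Measurable ψ) (ρ : Measure C)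
    (h : ∀ x, ((ν.withDensity fun z => G (x, z)).map fun z => ψ (x, z)) = ρ) :
    ((μ.prod ν).withDensity G).map ψ = ρ := by
  ext s hs
  -- By Tonelli, the mass of `ψ ⁻¹' s` is the `μ`-average of the masses of its sections.
  have hsection : ∀ x, ∫⁻ z, (ψ ⁻¹' s).indicator G (x, z) ∂ν = ρ s := fun x => by
    have hψx : Measurable fun z => ψ (x, z) := hψ.comp measurable_prodMk_left
    rw [← h x, Measure.map_apply hψx hs, withDensity_apply _ (hψx hs),
      ← lintegral_indicator (hψx hs)]
    rfl
  rw [Measure.map_apply hψ hs, withDensity_apply _ (hψ hs), ← lintegral_indicator (hψ hs),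
    lintegral_prod _ (hG.indicator (hψ hs)).aemeasurable]
  simp [hsection]

lemma ProbabilityTheory.iIndepFun.map_succ_fin_eq_pi {Ω β : Type*} [MeasurableSpace Ω]
    [MeasurableSpace β] {Q : Measure Ω} {Z : ℕ → Ω → β} (hZ : iIndepFun Z Q)
    (hZ_meas : ∀ k, Measurable (Z k)) {ν : Measure β} (hZ_law : ∀ k, 1 ≤ k → Q.map (Z k) = ν)
    (n : ℕ) :
    Q.map (fun ω (k : Fin n) => Z (k + 1) ω) = Measure.pi fun _ => ν := by
  rw [(hZ.precomp (g := fun k : Fin n => k.val + 1)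
    ((add_left_injective 1).comp Fin.val_injective)).map_fun_eq_pi_map
    fun k => (hZ_meas _).aemeasurable]
  exact congrArg Measure.pi (funext fun k => hZ_law _ (by omega))

lemma sum_Icc_one_eq_sum_fin {M : Type*} [AddCommMonoid M] (n : ℕ) (h : ℕ → M) :
    ∑ k ∈ Finset.Icc 1 n, h k = ∑ k : Fin n, h (k + 1) := by
  rw [Fin.sum_univ_eq_sum_range (fun k => h (k + 1)), Finset.range_eq_Ico, Finset.sum_Ico_add',
    zero_add, Finset.Ico_add_one_right_eq_Icc]

lemma prod_prod_gaussianTiltDensity_of_sq_eq_one {κ ι : Type*} [Fintype κ] [Fintype ι]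
    (c : ℝ) (x z : κ → ι → ℝ) (hx : ∀ k i, x k i ^ 2 = 1) :
    ∏ k, ∏ i, gaussianTiltDensity (c * x k i) (z k i)
      = ENNReal.ofReal (Real.exp (c * ∑ k, ∑ i, x k i * z k i
          - c ^ 2 * Fintype.card ι * Fintype.card κ / 2)) := by
  have hexp : c * ∑ k, ∑ i, x k i * z k i - c ^ 2 * Fintype.card ι * Fintype.card κ / 2
      = ∑ k, ∑ i, (c * x k i * z k i - (c * x k i) ^ 2 / 2) := by
    simp only [mul_pow, hx, mul_one, Finset.sum_sub_distrib, Finset.sum_const, Finset.card_univ,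
      nsmul_eq_mul, Finset.mul_sum, mul_assoc]
    ring
  simp only [gaussianTiltDensity, hexp, Real.exp_sum]
  rw [ENNReal.ofReal_prod_of_nonneg fun k _ => by positivity]
  exact Finset.prod_congr rfl fun k _ => by
    rw [ENNReal.ofReal_prod_of_nonneg fun i _ => by positivity]

theorem stmt_9_general
    {Ω : Type*} [mΩ : MeasurableSpace Ω] (Q : Measure Ω) [IsProbabilityMeasure Q]
    (n₀ n_p : ℕ) (c : ℝ)
    (Z : ℕ → Ω → (Fin n₀ → ℝ)) (X : ℕ → Ω → (Fin n₀ → ℝ))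
    (hZ_meas : ∀ k, Measurable (Z k))
    (hZ_law : ∀ k, 1 ≤ k → Q.map (Z k) = Measure.pi fun _ => gaussianReal 0 1)
    (hZ_iid : iIndepFun Z Q)
    (hX_meas : ∀ k, Measurable (X k))
    (hX_pm : ∀ k ω i, X k ω i = 1 ∨ X k ω i = -1)
    (hXZ_indep :
      IndepFun (fun ω => fun k => X k ω) (fun ω => fun k => Z k ω) Q)
    (β : Ω → ℝ)
    (hβ : ∀ ω, β ω =
      Real.exp (c * ∑ k ∈ Finset.Icc 1 n_p, ∑ i, X k ω i * Z k ω i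
        - c ^ 2 * n₀ * n_p / 2))
    (P : Measure Ω)
    (hP : P = Q.withDensity fun ω => ENNReal.ofReal (β ω))
    (W : ℕ → Ω → (Fin n₀ → ℝ))
    (hW : ∀ k ω i, W k ω i = Z k ω i - c * X k ω i) :
    P.map (fun ω => fun k : Fin n_p => W (k.val + 1) ω)
      = Measure.pi fun _ : Fin n_p => Measure.pi fun _ : Fin n₀ => gaussianReal 0 1 := by
  let shift : (ℕ → Fin n₀ → ℝ) → Fin n_p → Fin n₀ → ℝ := fun y k => y (k + 1)
  have hshift : Measurable shift := measurable_pi_lambda _ fun k => measurable_pi_apply _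
  let T : Ω → (Fin n_p → Fin n₀ → ℝ) × (Fin n_p → Fin n₀ → ℝ) :=
    fun ω => (shift fun k => X k ω, shift fun k => Z k ω)
  have hT : Measurable T := (hshift.comp (measurable_pi_lambda _ hX_meas)).prodMk
    (hshift.comp (measurable_pi_lambda _ hZ_meas))
  let G : (Fin n_p → Fin n₀ → ℝ) × (Fin n_p → Fin n₀ → ℝ) → ℝ≥0∞ :=
    fun p => ∏ k, ∏ i, gaussianTiltDensity (c * p.1 k i) (p.2 k i)
  let ψ : (Fin n_p → Fin n₀ → ℝ) × (Fin n_p → Fin n₀ → ℝ) → Fin n_p → Fin n₀ → ℝ :=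
    fun p k i => p.2 k i - c * p.1 k i
  have hjoint : Q.map T = (Q.map fun ω => shift fun k => X k ω).prod
      (Q.map fun ω => shift fun k => Z k ω) :=
    (indepFun_iff_map_prod_eq_prod_map_map (hT.fst).aemeasurable (hT.snd).aemeasurable).mp
      (hXZ_indep.comp hshift hshift)
  have hβG : (fun ω => ENNReal.ofReal (β ω)) = G ∘ T := by
    funext ω
    have hX_sq : ∀ (k : Fin n_p) i, X (k + 1) ω i ^ 2 = 1 := fun k i => by
      rcases hX_pm (k + 1) ω i with h | h <;> simp [h]
    simpa [hβ, sum_Icc_one_eq_sum_fin] using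
      (prod_prod_gaussianTiltDensity_of_sq_eq_one c _ (fun k : Fin n_p => Z (k + 1) ω) hX_sq).symm
  have hWψ : (fun ω k => W (k.val + 1) ω) = ψ ∘ T := by
    funext ω k i
    exact hW _ ω i
  have := Measure.isProbabilityMeasure_map (μ := Q) hT.fst.aemeasurable
  rw [hP, hβG, hWψ, ← Measure.map_map (by fun_prop) hT, map_withDensity_comp Q hT (by fun_prop),
    hjoint, hZ_iid.map_succ_fin_eq_pi hZ_meas hZ_law]
  exact map_withDensity_prod_eq_of_forall _ _ (by fun_prop) (by fun_prop) _ fun x =>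
    map_sub_withDensity_prod_gaussianTiltDensity fun k i => c * x k i

/-- **discrete Girsanov shift.** With i.i.d. standard Gaussian observations
`(Z_k)_{k≥1}` and signals `(X_k)_{k≥1}` (components in `{−1,+1}`) independent of them under `Q`,
define `β_{n_p} = exp(c ∑_{k=1}^{n_p} ⟨X_k, Z_k⟩ − ½ c² n₀ n_p)` and `dP = β_{n_p} dQ`.
Then under `P` the shifted vectors `W_k = Z_k − c X_k`, `1 ≤ k ≤ n_p`, are mutually independent
standard Gaussian vectors in `ℝ^{n₀}`. -/
theorem stmt_9
    {Ω : Type*} [mΩ : MeasurableSpace Ω] (Q : Measure Ω) [IsProbabilityMeasure Q]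
    (n₀ n_p : ℕ) (hn₀ : 0 < n₀) (hn_p : 0 < n_p) (c : ℝ) (hc : 0 < c)
    (Z : ℕ → Ω → (Fin n₀ → ℝ)) (X : ℕ → Ω → (Fin n₀ → ℝ))
    (hZ_meas : ∀ k, Measurable (Z k))
    (hZ_law : ∀ k, 1 ≤ k → Q.map (Z k) = Measure.pi fun _ => gaussianReal 0 1)
    (hZ_iid : iIndepFun Z Q)
    (hX_meas : ∀ k, Measurable (X k))
    (hX_pm : ∀ k ω i, X k ω i = 1 ∨ X k ω i = -1)
    (hXZ_indep :
      IndepFun (fun ω => fun k => X k ω) (fun ω => fun k => Z k ω) Q)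
    (β : Ω → ℝ)
    (hβ : ∀ ω, β ω =
      Real.exp (c * ∑ k ∈ Finset.Icc 1 n_p, ∑ i, X k ω i * Z k ω i
        - c ^ 2 * n₀ * n_p / 2))
    (P : Measure Ω)
    (hP : P = Q.withDensity fun ω => ENNReal.ofReal (β ω))
    (W : ℕ → Ω → (Fin n₀ → ℝ))
    (hW : ∀ k ω i, W k ω i = Z k ω i - c * X k ω i) :
    P.map (fun ω => fun k : Fin n_p => W (k.val + 1) ω)
      = Measure.pi fun _ : Fin n_p => Measure.pi fun _ : Fin n₀ => gaussianReal 0 1 :=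
  stmt_9_general (mΩ := mΩ) Q n₀ n_p c Z X hZ_meas hZ_law hZ_iid hX_meas hX_pm hXZ_indep β hβ P hP W
    hW
end

section
/- Let (Ω, F, P) be a probability space, let α : Ω → ℝ be measurable with α(ω) > 0 for all ω and ∫ α dP = 1, and let Q be the probability measure with density α with respect to P. Let B be a sub-σ-field of F. Then, P-almost surely, E_P(α | B) · E_Q(α⁻¹ | B) = 1; equivalently E_P(α | B) = 1 / E_Q(α⁻¹ | B) almost surely. -/
/-!
Write `Q = α • P`. For `B`-measurable `s`,
`∫_s α E_Q(g | B) dP = ∫_s E_Q(g | B) dQ = ∫_s g dQ = ∫_s α g dP`, so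
`E_P(α E_Q(g | B) | B) = E_P(α g | B)`; pulling out the `B`-measurable factor gives the Bayes
formula `E_P(α | B) E_Q(g | B) = E_P(α g | B)`, and `g = α⁻¹` turns the right side into
`E_P(1 | B) = 1`.
-/

open MeasureTheory ProbabilityTheory

section WithDensity

variable {Ω : Type*} {m mΩ : MeasurableSpace Ω} {μ : Measure Ω} {f : Ω → ℝ}

theorem integrable_withDensity_ofReal_iff (hf : AEMeasurable f μ) (hf0 : 0 ≤ᵐ[μ] f)
    {g : Ω → ℝ} :
    Integrable g (μ.withDensity fun x => ENNReal.ofReal (f x)) ↔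
      Integrable (fun x => f x * g x) μ := by
  rw [integrable_withDensity_iff_integrable_smul₀' hf.ennreal_ofReal
    (.of_forall fun _ => ENNReal.ofReal_lt_top)]
  refine integrable_congr ?_
  filter_upwards [hf0] with x hx
  rw [ENNReal.toReal_ofReal hx, smul_eq_mul]

theorem setIntegral_withDensity_ofReal (hf : AEMeasurable f μ) (hf0 : 0 ≤ᵐ[μ] f)
    (g : Ω → ℝ) {s : Set Ω} (hs : MeasurableSet s) :
    ∫ x in s, g x ∂μ.withDensity (fun x => ENNReal.ofReal (f x)) =
      ∫ x in s, f x * g x ∂μ := by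
  rw [setIntegral_withDensity_eq_setIntegral_toReal_smul₀ hf.ennreal_ofReal.restrict
    (.of_forall fun _ => ENNReal.ofReal_lt_top) g hs]
  refine integral_congr_ae ?_
  filter_upwards [ae_restrict_of_ae hf0] with x hx
  rw [ENNReal.toReal_ofReal hx, smul_eq_mul]

theorem condExp_mul_condExp_withDensity [IsFiniteMeasure μ] (hm : m ≤ mΩ)
    (hf : Integrable f μ) (hf0 : 0 ≤ᵐ[μ] f) {g : Ω → ℝ}
    (hg : Integrable g (μ.withDensity fun x => ENNReal.ofReal (f x))) :
    μ[f | m] * (μ.withDensity fun x => ENNReal.ofReal (f x))[g | m] =ᵐ[μ] μ[f * g | m] := by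
  set ν := μ.withDensity fun x => ENNReal.ofReal (f x)
  have : IsFiniteMeasure ν := isFiniteMeasure_withDensity_ofReal hf.2
  set k := ν[g | m]
  have hν_setIntegral (s : Set Ω) (hs : MeasurableSet s) (h : Ω → ℝ) :=
    setIntegral_withDensity_ofReal hf.aemeasurable hf0 h hs
  have hfk : Integrable (f * k) μ :=
    (integrable_withDensity_ofReal_iff hf.aemeasurable hf0).1 integrable_condExp
  have hfg : Integrable (f * g) μ :=
    (integrable_withDensity_ofReal_iff hf.aemeasurable hf0).1 hg
  have hsame : μ[f * g | m] =ᵐ[μ] μ[f * k | m] := by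
    refine ae_eq_condExp_of_forall_setIntegral_eq hm hfk
      (fun s _ _ => integrable_condExp.integrableOn) (fun s hs _ => ?_)
      stronglyMeasurable_condExp.aestronglyMeasurable
    calc ∫ x in s, μ[f * g | m] x ∂μ
        = ∫ x in s, f x * g x ∂μ := setIntegral_condExp hm hfg hs
      _ = ∫ x in s, g x ∂ν := (hν_setIntegral s (hm s hs) g).symm
      _ = ∫ x in s, k x ∂ν := (setIntegral_condExp hm hg hs).symm
      _ = ∫ x in s, f x * k x ∂μ := hν_setIntegral s (hm s hs) k
  filter_upwards [hsame, condExp_mul_of_stronglyMeasurable_right stronglyMeasurable_condExp hfk hf]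
    with x h₁ h₂
  rw [h₁, h₂]

theorem condExp_mul_condExp_inv_withDensity [IsFiniteMeasure μ] (hm : m ≤ mΩ)
    (hf : Integrable f μ) (hf_pos : ∀ᵐ x ∂μ, 0 < f x) :
    μ[f | m] * (μ.withDensity fun x => ENNReal.ofReal (f x))[f⁻¹ | m] =ᵐ[μ] 1 := by
  have hf0 : 0 ≤ᵐ[μ] f := hf_pos.mono fun _ hx => hx.le
  have hff : f * f⁻¹ =ᵐ[μ] fun _ => 1 := hf_pos.mono fun x hx => mul_inv_cancel₀ hx.ne'
  have hinv : Integrable f⁻¹ (μ.withDensity fun x => ENNReal.ofReal (f x)) :=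
    (integrable_withDensity_ofReal_iff hf.aemeasurable hf0).2
      ((integrable_congr hff.symm).1 (integrable_const 1))
  filter_upwards [condExp_mul_condExp_withDensity hm hf hf0 hinv, condExp_congr_ae (m := m) hff]
    with x h₁ h₂
  rw [h₁, h₂, condExp_const hm]
  rfl

end WithDensity

theorem stmt_12_general
    {Ω : Type*} (B : MeasurableSpace Ω) [mΩ : MeasurableSpace Ω]
    (P : Measure Ω) [IsProbabilityMeasure P]
    (α : Ω → ℝ) (hα_pos : ∀ ω, 0 < α ω)
    (hα_int : ∫ ω, α ω ∂P = 1)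
    (Q : Measure Ω)
    (hQ : Q = P.withDensity fun ω => ENNReal.ofReal (α ω))
    (hB : B ≤ mΩ) :
    ((fun ω => (P[α | B]) ω * (Q[(fun ω' => (α ω')⁻¹) | B]) ω) =ᵐ[P] fun _ => 1) ∧
      (P[α | B] =ᵐ[P] fun ω => 1 / (Q[(fun ω' => (α ω')⁻¹) | B]) ω) := by
  subst hQ
  have hα : Integrable α P := Integrable.of_integral_ne_zero (by simp [hα_int])
  have hmul := condExp_mul_condExp_inv_withDensity hB hα (.of_forall hα_pos)
  refine ⟨hmul, ?_⟩
  filter_upwards [hmul] with ω h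
  exact eq_one_div_of_mul_eq_one_left h

/-- If `dQ = α dP` with `α` everywhere positive and `∫ α dP = 1`, and `B` is
a sub-σ-field, then almost surely `E_P(α | B) · E_Q(α⁻¹ | B) = 1`, equivalently
`E_P(α | B) = 1 / E_Q(α⁻¹ | B)`. -/
theorem stmt_12
    {Ω : Type*} (B : MeasurableSpace Ω) [mΩ : MeasurableSpace Ω]
    (P : Measure Ω) [IsProbabilityMeasure P]
    (α : Ω → ℝ) (hα_meas : Measurable[mΩ] α) (hα_pos : ∀ ω, 0 < α ω)
    (hα_int : ∫ ω, α ω ∂P = 1)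
    (Q : Measure Ω)
    (hQ : Q = P.withDensity fun ω => ENNReal.ofReal (α ω))
    (hB : B ≤ mΩ) :
    ((fun ω => (P[α | B]) ω * (Q[(fun ω' => (α ω')⁻¹) | B]) ω) =ᵐ[P] fun _ => 1) ∧
      (P[α | B] =ᵐ[P] fun ω => 1 / (Q[(fun ω' => (α ω')⁻¹) | B]) ω) :=
  stmt_12_general B (mΩ := mΩ) P α hα_pos hα_int Q hQ hB
end

section
/- Conditional probability of an encoded block given the observations (main result): Let n₀, n be positive integers, c > 0 a real constant, and let C be a nonempty finite subset of ({−1,+1}^{n₀})^n (the code, viewed as a set of sequences x = (x_1, …, x_n) of branch vectors x_k ∈ {−1,+1}^{n₀} ⊆ ℝ^{n₀}). On a probability space (Ω, F, P), let X = (X_1, …, X_n) : Ω → (ℝ^{n₀})^n be uniformly distributed on C, let W = (W_1, …, W_n) : Ω → (ℝ^{n₀})^n have all n·n₀ components i.i.d. standard normal N(0,1), with X independent of W, and set Z_k = cX_k + W_k. Define the metric pm(x) = exp(c Σ_{k=1}^n ⟨x_k, Z_k⟩ − ½ c² n₀ n) for x ∈ C. Then for every 1 ≤ l ≤ n and every subset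 B ⊆ {−1,+1}^{n₀}, P-almost surely, P(X_l ∈ B | σ(Z_1, …, Z_n)) = (Σ_{x ∈ C, x_l ∈ B} pm(x)) / (Σ_{x ∈ C} pm(x)), where P(X_l ∈ B | σ(Z_1, …, Z_n)) denotes the conditional expectation of the indicator of {X_l ∈ B} given the σ-field generated by Z_1, …, Z_n. -/
/-!
Given `X = x`, the observation `Z = c x + W` is a standard Gaussian vector shifted by `c x`, whose
law is the standard Gaussian reweighted by the Cameron–Martin density
`exp (⟨c x, z⟩ - ‖c x‖² / 2)`; as the entries of `x` are `±1`, `‖c x‖² = c² n₀ n` and this density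
is `pm x`. So `(X, Z)` has density `|C|⁻¹ pm x z` with respect to counting measure on `C` times the
Gaussian, and Bayes' formula gives the conditional probability: both sides have the same integral
over every set `{Z ∈ A}`.
-/

open MeasureTheory ProbabilityTheory
open scoped Classical ENNReal

theorem MeasurableSpace.iSup_comap_eq_comap_pi {ι β : Type*} {X : ι → Type*}
    [∀ i, MeasurableSpace (X i)] (g : ∀ i, β → X i) :
    ⨆ i, MeasurableSpace.comap (g i) inferInstance
      = MeasurableSpace.pi.comap fun b i => g i b := by
  simp only [MeasurableSpace.pi, MeasurableSpace.comap_iSup, MeasurableSpace.comap_comp]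
  rfl

namespace MeasureTheory.Measure

variable {ι : Type*} [Fintype ι] {α β : ι → Type*} [∀ i, MeasurableSpace (α i)]
  [∀ i, MeasurableSpace (β i)] {μ : ∀ i, Measure (α i)} [∀ i, IsProbabilityMeasure (μ i)]

theorem pi_withDensity {f : ∀ i, α i → ℝ≥0∞} (hf : ∀ i, Measurable (f i))
    [∀ i, SigmaFinite ((μ i).withDensity (f i))] :
    Measure.pi (fun i => (μ i).withDensity (f i))
      = (Measure.pi μ).withDensity (fun x => ∏ i, f i (x i)) := by
  refine pi_eq fun s hs => ?_
  have hind : (Set.univ.pi s).indicator (fun x => ∏ i, f i (x i))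
      = fun x => ∏ i, (s i).indicator (f i) (x i) := by
    ext x
    by_cases hx : x ∈ Set.univ.pi s
    · simp_all [Set.indicator_of_mem]
    · obtain ⟨i, hi⟩ := by simpa only [Set.mem_univ_pi, not_forall] using hx
      rw [Set.indicator_of_notMem hx, Finset.prod_eq_zero (Finset.mem_univ i)
        (Set.indicator_of_notMem hi _)]
  rw [withDensity_apply _ (.univ_pi hs), ← lintegral_indicator (.univ_pi hs), hind,
    lintegral_prod_eq_prod_lintegral_of_indepFun _ _
      (iIndepFun_pi fun i => ((hf i).indicator (hs i)).aemeasurable)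
      (fun i => ((hf i).indicator (hs i)).comp (measurable_pi_apply i))]
  exact Finset.prod_congr rfl fun i _ => by
    rw [withDensity_apply _ (hs i), ← lintegral_indicator (hs i),
      (measurePreserving_eval μ i).lintegral_comp ((hf i).indicator (hs i))]

theorem pi_map_pi_eq_withDensity {f : ∀ i, α i → β i} (hf : ∀ i, Measurable (f i))
    {g : ∀ i, β i → ℝ≥0∞} (hg : ∀ i, Measurable (g i)) {ν : ∀ i, Measure (β i)}
    [∀ i, IsProbabilityMeasure (ν i)] (h : ∀ i, (μ i).map (f i) = (ν i).withDensity (g i)) :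
    (Measure.pi μ).map (fun x i => f i (x i))
      = (Measure.pi ν).withDensity (fun x => ∏ i, g i (x i)) := by
  have : ∀ i, IsProbabilityMeasure ((ν i).withDensity (g i)) := fun i => by
    rw [← h i]; exact isProbabilityMeasure_map (hf i).aemeasurable
  rw [pi_map_pi (fun i => (hf i).aemeasurable), ← pi_withDensity hg]
  simp_rw [h]

end MeasureTheory.Measure

open Real in
theorem gaussianReal_map_const_add_eq_withDensity (m : ℝ) :
    (gaussianReal 0 1).map (m + ·)
      = (gaussianReal 0 1).withDensity (fun z => ENNReal.ofReal (exp (m * z - m ^ 2 / 2))) := by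
  have hexp : Measurable fun z : ℝ => exp (m * z - m ^ 2 / 2) := by fun_prop
  rw [gaussianReal_map_const_add, zero_add, gaussianReal_of_var_ne_zero 0 one_ne_zero,
    gaussianReal_of_var_ne_zero m one_ne_zero,
    ← withDensity_mul _ (measurable_gaussianPDF _ _) hexp.ennreal_ofReal]
  congr 1 with z
  rw [Pi.mul_apply, gaussianPDF, gaussianPDF, ← ENNReal.ofReal_mul (gaussianPDFReal_nonneg _ _ _)]
  simp only [gaussianPDFReal, NNReal.coe_one, mul_one, sub_zero, mul_assoc, ← exp_add]
  ring_nf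

open Real in
theorem gaussianReal_pi_pi_map_add {ι κ : Type*} [Fintype ι] [Fintype κ] (m : ι → κ → ℝ) :
    (Measure.pi fun _ : ι => Measure.pi fun _ : κ => gaussianReal 0 1).map
        (fun w i j => m i j + w i j)
      = (Measure.pi fun _ : ι => Measure.pi fun _ : κ => gaussianReal 0 1).withDensity
          (fun z => ∏ i, ∏ j, ENNReal.ofReal (exp (m i j * z i j - m i j ^ 2 / 2))) := by
  refine Measure.pi_map_pi_eq_withDensity (fun i => by fun_prop) (fun i => by fun_prop)
    fun i => Measure.pi_map_pi_eq_withDensity (fun j => by fun_prop) (fun j => by fun_prop)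
      fun j => gaussianReal_map_const_add_eq_withDensity (m i j)

open Real in
theorem gaussianReal_pi_pi_map_add_of_sign {ι κ : Type*} [Fintype ι] [Fintype κ] (c : ℝ)
    {x : ι → κ → ℝ} (hx : ∀ i j, x i j = 1 ∨ x i j = -1) :
    (Measure.pi fun _ : ι => Measure.pi fun _ : κ => gaussianReal 0 1).map
        (fun w i j => c * x i j + w i j)
      = (Measure.pi fun _ : ι => Measure.pi fun _ : κ => gaussianReal 0 1).withDensity
          (fun z => ENNReal.ofReal (exp (c * ∑ i, ∑ j, x i j * z i j
            - c ^ 2 * Fintype.card κ * Fintype.card ι / 2))) := by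
  rw [gaussianReal_pi_pi_map_add (fun i j => c * x i j)]
  congr with z
  simp_rw [← ENNReal.ofReal_prod_of_nonneg fun _ _ => (exp_pos _).le, ← exp_sum]
  rw [← ENNReal.ofReal_prod_of_nonneg fun _ _ => (exp_pos _).le, ← exp_sum]
  have hsq : ∀ i j, (c * x i j) ^ 2 = c ^ 2 := fun i j => by
    rcases hx i j with h | h <;> simp [h]
  simp only [hsq, Finset.sum_sub_distrib, Finset.mul_sum, Finset.sum_const, Finset.card_univ,
    nsmul_eq_mul]
  ring_nf

theorem setIntegral_withDensity_ofReal_s13 {G : Type*} [MeasurableSpace G] {μ : Measure G}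
    {F : G → ℝ} (hF : Measurable F) (hF_nonneg : ∀ z, 0 ≤ F z) (g : G → ℝ) {A : Set G}
    (hA : MeasurableSet A) :
    ∫ z in A, g z ∂μ.withDensity (fun z => ENNReal.ofReal (F z)) = ∫ z in A, F z * g z ∂μ := by
  change ∫ z in A, g z ∂μ.withDensity (fun z => ((F z).toNNReal : ℝ≥0∞)) = _
  rw [setIntegral_withDensity_eq_setIntegral_smul hF.real_toNNReal g hA]
  simp_rw [NNReal.smul_def, Real.coe_toNNReal _ (hF_nonneg _), smul_eq_mul]

section

variable {Ω E G : Type*} [MeasurableSpace Ω] [MeasurableSpace E] [MeasurableSingletonClass E]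
  [MeasurableSpace G] {P : Measure Ω} {μ : Measure G} {X : Ω → E} {Z : Ω → G} {C : Finset E}
  {f : E → G → ℝ}

theorem measurableSet_preimage_of_forall_mem (hX : Measurable X) (hXC : ∀ ω, X ω ∈ C)
    (S : Set E) : MeasurableSet (X ⁻¹' S) := by
  have : X ⁻¹' S = X ⁻¹' (S ∩ C) := by ext ω; simp [hXC ω]
  rw [this]
  exact hX ((C.finite_toSet.subset Set.inter_subset_right).measurableSet)

theorem map_restrict_preimage_eq_withDensity_sum (hX : Measurable X) (hZ : Measurable Z)
    (hXC : ∀ ω, X ω ∈ C) (hf : ∀ x, Measurable (f x)) (hf_nonneg : ∀ x z, 0 ≤ f x z)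
    (hjoint : ∀ x ∈ C,
      (P.restrict (X ⁻¹' {x})).map Z = μ.withDensity (fun z => ENNReal.ofReal (f x z)))
    (S : Set E) :
    (P.restrict (X ⁻¹' S)).map Z
      = μ.withDensity (fun z => ENNReal.ofReal (∑ x ∈ C with x ∈ S, f x z)) := by
  ext A hA
  have hsplit : Z ⁻¹' A ∩ X ⁻¹' S = ⋃ x ∈ C.filter (· ∈ S), Z ⁻¹' A ∩ X ⁻¹' {x} := by
    ext ω; simp [hXC ω]
  have hdisj : Set.PairwiseDisjoint ↑(C.filter (· ∈ S)) fun x => Z ⁻¹' A ∩ X ⁻¹' {x} :=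
    fun x _ y _ hxy => Set.disjoint_left.2 fun ω hx hy => hxy (hx.2.symm.trans hy.2)
  rw [Measure.map_apply hZ hA, Measure.restrict_apply (hZ hA), hsplit,
    measure_biUnion_finset hdisj fun x _ => (hZ hA).inter (hX (measurableSet_singleton x)),
    withDensity_apply _ hA]
  simp_rw [ENNReal.ofReal_sum_of_nonneg fun x _ => hf_nonneg x _]
  rw [lintegral_finsetSum _ fun x _ => (hf x).ennreal_ofReal]
  refine Finset.sum_congr rfl fun x hx => ?_
  rw [← withDensity_apply _ hA, ← hjoint x (Finset.mem_filter.1 hx).1, Measure.map_apply hZ hA,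
    Measure.restrict_apply (hZ hA)]

theorem condExp_indicator_preimage_ae_eq_posterior [IsFiniteMeasure P] (hX : Measurable X)
    (hZ : Measurable Z) (hXC : ∀ ω, X ω ∈ C) (hf : ∀ x, Measurable (f x))
    (hf_nonneg : ∀ x z, 0 ≤ f x z)
    (hjoint : ∀ x ∈ C,
      (P.restrict (X ⁻¹' {x})).map Z = μ.withDensity (fun z => ENNReal.ofReal (f x z)))
    (S : Set E) :
    P[(X ⁻¹' S).indicator (fun _ => (1 : ℝ)) | MeasurableSpace.comap Z inferInstance]
      =ᵐ[P] fun ω => (∑ x ∈ C with x ∈ S, f x (Z ω)) / ∑ x ∈ C, f x (Z ω) := by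
  set num : G → ℝ := fun z => ∑ x ∈ C with x ∈ S, f x z
  set den : G → ℝ := fun z => ∑ x ∈ C, f x z
  have hnum : Measurable num := Finset.measurable_sum _ fun x _ => hf x
  have hden : Measurable den := Finset.measurable_sum _ fun x _ => hf x
  have hnum_nonneg : ∀ z, 0 ≤ num z := fun z => Finset.sum_nonneg fun x _ => hf_nonneg x z
  have hden_nonneg : ∀ z, 0 ≤ den z := fun z => Finset.sum_nonneg fun x _ => hf_nonneg x z
  have hnum_le : ∀ z, num z ≤ den z := fun z =>
    Finset.sum_le_sum_of_subset_of_nonneg (Finset.filter_subset _ _)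
      fun x _ _ => hf_nonneg x z
  have hlaw : ∀ T, (P.restrict (X ⁻¹' T)).map Z
      = μ.withDensity (fun z => ENNReal.ofReal (∑ x ∈ C with x ∈ T, f x z)) :=
    map_restrict_preimage_eq_withDensity_sum hX hZ hXC hf hf_nonneg hjoint
  have hlaw_univ : P.map Z = μ.withDensity (fun z => ENNReal.ofReal (den z)) := by
    simpa using hlaw Set.univ
  have hS := measurableSet_preimage_of_forall_mem hX hXC S
  have hq : Measurable fun z => num z / den z := hnum.div hden
  have hq_int : Integrable (fun ω => num (Z ω) / den (Z ω)) P := by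
    refine .of_bound (hq.comp hZ).aestronglyMeasurable 1 (ae_of_all _ fun ω => ?_)
    rw [Real.norm_of_nonneg (div_nonneg (hnum_nonneg _) (hden_nonneg _))]
    exact div_le_one_of_le₀ (hnum_le _) (hden_nonneg _)
  refine (ae_eq_condExp_of_forall_setIntegral_eq hZ.comap_le
    ((integrable_const 1).indicator hS) (fun _ _ _ => hq_int.integrableOn) ?_
    (hq.stronglyMeasurable.comp_measurable
      (Measurable.of_comap_le le_rfl)).aestronglyMeasurable).symm
  rintro _ ⟨A, hA, rfl⟩ -
  calc ∫ ω in Z ⁻¹' A, num (Z ω) / den (Z ω) ∂P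
      = ∫ z in A, num z / den z ∂P.map Z :=
        (setIntegral_map hA hq.aestronglyMeasurable hZ.aemeasurable).symm
    _ = ∫ z in A, den z * (num z / den z) ∂μ := by
        rw [hlaw_univ, setIntegral_withDensity_ofReal_s13 hden hden_nonneg _ hA]
    _ = ∫ z in A, num z * 1 ∂μ := by
        congr with z
        rw [mul_one]
        exact mul_div_cancel_of_imp' fun h => le_antisymm (h ▸ hnum_le z) (hnum_nonneg z)
    _ = ∫ z in A, 1 ∂(P.restrict (X ⁻¹' S)).map Z := by
        rw [hlaw, setIntegral_withDensity_ofReal_s13 hnum hnum_nonneg _ hA]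
    _ = ∫ ω in Z ⁻¹' A, (X ⁻¹' S).indicator (fun _ => (1 : ℝ)) ω ∂P := by
        rw [setIntegral_map hA aestronglyMeasurable_const hZ.aemeasurable,
          Measure.restrict_restrict (hZ hA), setIntegral_indicator hS]

theorem map_restrict_preimage_singleton_of_indepFun {F : Type*} [MeasurableSpace F] {W : Ω → F}
    (hX : Measurable X) (hW : Measurable W) (hXW : IndepFun X W P) {T : E → F → G} (x : E)
    (hT : Measurable (T x)) :
    (P.restrict (X ⁻¹' {x})).map (fun ω => T (X ω) (W ω))
      = P (X ⁻¹' {x}) • (P.map W).map (T x) := by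
  have hx : MeasurableSet (X ⁻¹' {x}) := hX (measurableSet_singleton x)
  have hZ : (fun ω => T (X ω) (W ω)) =ᵐ[P.restrict (X ⁻¹' {x})] T x ∘ W := by
    filter_upwards [ae_restrict_mem hx] with ω hω
    rw [Function.comp_apply, show X ω = x from hω]
  ext A hA
  rw [Measure.map_congr hZ, Measure.map_apply (hT.comp hW) hA,
    Measure.restrict_apply ((hT.comp hW) hA), Set.inter_comm, Set.preimage_comp,
    hXW.measure_inter_preimage_eq_mul _ _ (measurableSet_singleton x) (hT hA),
    Measure.smul_apply, Measure.map_map hT hW, Measure.map_apply (hT.comp hW) hA, smul_eq_mul]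
  rfl

end

theorem stmt_13_general
    {Ω : Type*} [mΩ : MeasurableSpace Ω] (P : Measure Ω) [IsProbabilityMeasure P]
    (n₀ n : ℕ) (c : ℝ)
    (C : Finset (Fin n → Fin n₀ → ℝ)) (hC_ne : C.Nonempty)
    (hC_pm : ∀ x ∈ C, ∀ k i, x k i = 1 ∨ x k i = -1)
    (X : Ω → (Fin n → Fin n₀ → ℝ)) (hX_meas : Measurable X)
    (hXC : ∀ ω, X ω ∈ C)
    (hX_unif : ∀ x ∈ C, P {ω | X ω = x} = (C.card : ENNReal)⁻¹)
    (W : Ω → (Fin n → Fin n₀ → ℝ)) (hW_meas : Measurable W)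
    (hW_law : P.map W
      = Measure.pi fun _ : Fin n => Measure.pi fun _ : Fin n₀ => gaussianReal 0 1)
    (hXW_indep : IndepFun X W P)
    (Z : Fin n → Ω → (Fin n₀ → ℝ))
    (hZ : ∀ k ω i, Z k ω i = c * X ω k i + W ω k i)
    (l : Fin n) (B : Set (Fin n₀ → ℝ)) :
    P[Set.indicator {ω | X ω l ∈ B} (fun _ => (1 : ℝ)) |
        ⨆ k : Fin n, MeasurableSpace.comap (Z k) inferInstance]
      =ᵐ[P] fun ω =>
        (∑ x ∈ C.filter (fun x => x l ∈ B),
            Real.exp (c * ∑ k, ∑ i, x k i * Z k ω i - c ^ 2 * n₀ * n / 2)) /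
          (∑ x ∈ C,
            Real.exp (c * ∑ k, ∑ i, x k i * Z k ω i - c ^ 2 * n₀ * n / 2)) := by
  let pm : (Fin n → Fin n₀ → ℝ) → (Fin n → Fin n₀ → ℝ) → ℝ := fun x z =>
    Real.exp (c * ∑ k, ∑ i, x k i * z k i - c ^ 2 * n₀ * n / 2)
  have hZ_eq : (fun ω k => Z k ω) = fun ω => (fun x w k i => c * x k i + w k i) (X ω) (W ω) := by
    funext ω k i; exact hZ k ω i
  have hjoint : ∀ x ∈ C, (P.restrict (X ⁻¹' {x})).map (fun ω k => Z k ω)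
      = (Measure.pi fun _ : Fin n => Measure.pi fun _ : Fin n₀ => gaussianReal 0 1).withDensity
          (fun z => ENNReal.ofReal ((C.card : ℝ)⁻¹ * pm x z)) := by
    intro x hx
    rw [hZ_eq, map_restrict_preimage_singleton_of_indepFun
        (T := fun x w k i => c * x k i + w k i) hX_meas hW_meas hXW_indep x (by fun_prop),
      hW_law, gaussianReal_pi_pi_map_add_of_sign c (hC_pm x hx), Fintype.card_fin,
      Fintype.card_fin, show X ⁻¹' {x} = {ω | X ω = x} from rfl, hX_unif x hx,
      ← withDensity_smul' _ _ (by simpa using hC_ne.ne_empty)]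
    congr with z
    rw [Pi.smul_apply, smul_eq_mul, ENNReal.ofReal_mul (by positivity),
      ENNReal.ofReal_inv_of_pos (by exact_mod_cast hC_ne.card_pos), ENNReal.ofReal_natCast]
  rw [MeasurableSpace.iSup_comap_eq_comap_pi]
  refine (condExp_indicator_preimage_ae_eq_posterior (S := {x | x l ∈ B}) hX_meas
    (by rw [hZ_eq]; fun_prop) hXC (fun x => by fun_prop) (fun x z => by positivity) hjoint).trans
    (.of_forall fun ω => ?_)
  simp_rw [← Finset.mul_sum]
  exact mul_div_mul_left _ _ (inv_ne_zero (Nat.cast_ne_zero.2 hC_ne.card_pos.ne'))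

/-- **main result.** Let `C` be a nonempty finite code of length-`n` sequences of
branch vectors in `{−1,+1}^{n₀}`, let `X` be uniformly distributed on `C`, let `W` have i.i.d.
standard normal components and be independent of `X`, and let `Z_k = c X_k + W_k`.  With the
metric `pm(x) = exp(c ∑_k ⟨x_k, Z_k⟩ − ½ c² n₀ n)`, for every block index `l` and every subset
`B` of `{−1,+1}^{n₀}`, almost surely
`P(X_l ∈ B | σ(Z_1, …, Z_n)) = (∑_{x ∈ C, x_l ∈ B} pm(x)) / (∑_{x ∈ C} pm(x))`. -/
theorem stmt_13
    {Ω : Type*} [mΩ : MeasurableSpace Ω] (P : Measure Ω) [IsProbabilityMeasure P]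
    (n₀ n : ℕ) (hn₀ : 0 < n₀) (hn : 0 < n) (c : ℝ) (hc : 0 < c)
    (C : Finset (Fin n → Fin n₀ → ℝ)) (hC_ne : C.Nonempty)
    (hC_pm : ∀ x ∈ C, ∀ k i, x k i = 1 ∨ x k i = -1)
    (X : Ω → (Fin n → Fin n₀ → ℝ)) (hX_meas : Measurable X)
    (hXC : ∀ ω, X ω ∈ C)
    (hX_unif : ∀ x ∈ C, P {ω | X ω = x} = (C.card : ENNReal)⁻¹)
    (W : Ω → (Fin n → Fin n₀ → ℝ)) (hW_meas : Measurable W)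
    (hW_law : P.map W
      = Measure.pi fun _ : Fin n => Measure.pi fun _ : Fin n₀ => gaussianReal 0 1)
    (hXW_indep : IndepFun X W P)
    (Z : Fin n → Ω → (Fin n₀ → ℝ))
    (hZ : ∀ k ω i, Z k ω i = c * X ω k i + W ω k i)
    (l : Fin n) (B : Set (Fin n₀ → ℝ)) (hB : ∀ v ∈ B, ∀ i, v i = 1 ∨ v i = -1) :
    P[Set.indicator {ω | X ω l ∈ B} (fun _ => (1 : ℝ)) |
        ⨆ k : Fin n, MeasurableSpace.comap (Z k) inferInstance]
      =ᵐ[P] fun ω =>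
        (∑ x ∈ C.filter (fun x => x l ∈ B),
            Real.exp (c * ∑ k, ∑ i, x k i * Z k ω i - c ^ 2 * n₀ * n / 2)) /
          (∑ x ∈ C,
            Real.exp (c * ∑ k, ∑ i, x k i * Z k ω i - c ^ 2 * n₀ * n / 2)) :=
  stmt_13_general (mΩ := mΩ) P n₀ n c C hC_ne hC_pm X hX_meas hXC hX_unif W hW_meas hW_law hXW_indep
    Z hZ l B
end
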